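/- arXiv:1805.10825 — 6 statements merged into one kernel-verified Lean document; each statement's English description precedes it below -/
import Mathlib

section
/- If a block ACI-matrix M = [[A, B], [0, C]] has A FRmR and C FRmR, then M is FRmR. -/
open MvPolynomial

/-- An ACI-matrix over a field `K`: entries are polynomials of total degree at most one
in indeterminates indexed by `ι`, and no indeterminate appears in two different columns. -/
structure ACIMatrix (K : Type) [Field K] (ι : Type) (m n : ℕ) where
  entry : Matrix (Fin m) (Fin n) (MvPolynomial ι K)
  deg_le : ∀ i j, (entry i j).totalDegree ≤ 1
  colIndep : ∀ (x : ι) (i i' : Fin m) (j j' : Fin n),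
      x ∈ (entry i j).vars → x ∈ (entry i' j').vars → j = j'

namespace ACIMatrix

variable {K : Type} [Field K] {ι : Type} {m n m' n' : ℕ}

/-- The constant matrix obtained by assigning values in `K` to all indeterminates. -/
noncomputable def completion (M : ACIMatrix K ι m n) (v : ι → K) : Matrix (Fin m) (Fin n) K :=
  fun i j => eval v (M.entry i j)

/-- The maximum rank of a completion of `M`. -/
noncomputable def maxRank (M : ACIMatrix K ι m n) : ℕ :=
  sSup {r | ∃ v : ι → K, (M.completion v).rank = r}

/-- Full row maxRank. -/
def FRmR (M : ACIMatrix K ι m n) : Prop := M.maxRank = m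

/-- Full column maxRank. -/
def FCmR (M : ACIMatrix K ι m n) : Prop := M.maxRank = n

/-- Full maxRank: some completion has full rank. -/
def FmR (M : ACIMatrix K ι m n) : Prop := M.maxRank = min m n

/-- A submatrix (with injective column selection) of an ACI-matrix is an ACI-matrix. -/
def subm (M : ACIMatrix K ι m n) (f : Fin m' → Fin m) (g : Fin n' → Fin n)
    (hg : Function.Injective g) : ACIMatrix K ι m' n' where
  entry := M.entry.submatrix f g
  deg_le := fun i j => M.deg_le _ _
  colIndep := fun x i i' j j' h h' => hg (M.colIndep x _ _ _ _ h h')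

/-- The contiguous block of size `p × q` whose top-left corner is at row `r`, column `c`. -/
def block (M : ACIMatrix K ι m n) (r c p q : ℕ) (hr : r + p ≤ m) (hc : c + q ≤ n) :
    ACIMatrix K ι p q :=
  M.subm (fun i => ⟨r + i.val, by omega⟩) (fun j => ⟨c + j.val, by omega⟩)
    (fun a b hab => Fin.ext (by
      have h : c + (a : ℕ) = c + (b : ℕ) := congrArg Fin.val hab
      omega))

/-- `M'` is equivalent to `M`:  `M' = R M Q` for a nonsingular constant matrix `R`
and a permutation `Q` of the columns. -/
def MEquiv (M M' : ACIMatrix K ι m n) : Prop :=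
  ∃ (R : Matrix (Fin m) (Fin m) K) (σ : Equiv.Perm (Fin n)),
    IsUnit R ∧ M'.entry = ((R.map MvPolynomial.C) * M.entry).submatrix id ⇑σ

/-- Transport an ACI-matrix along equalities of its dimensions. -/
def castSize (h : m = m') (h' : n = n') (M : ACIMatrix K ι m n) : ACIMatrix K ι m' n' :=
  M.subm (Fin.cast h.symm) (Fin.cast h'.symm)
    (fun a b hab => Fin.ext (by simpa using congrArg Fin.val hab))

theorem card_le_n {n : ℕ} (Fs : Finset (Fin n)) : Fs.card ≤ n :=
  (Finset.card_le_univ Fs).trans_eq (Finset.card_fin n)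

/-- `Fs` is a factor set of `M`: some `R M Q_Fs = [[A,B],[0,C]]` with a Big zero block,
`A` (on the columns of `Fs`) FRmR and `C` FCmR. -/
def IsFactorSet (M : ACIMatrix K ι m n) (Fs : Finset (Fin n)) : Prop :=
  ∃ (R : Matrix (Fin m) (Fin m) K) (σ : Equiv.Perm (Fin n)) (N : ACIMatrix K ι m n)
    (r : ℕ) (hr : r ≤ m),
    IsUnit R ∧
    (∀ j : Fin n, j ∈ Fs ↔ (σ j).val < Fs.card) ∧
    N.entry = ((R.map MvPolynomial.C) * M.entry).submatrix id ⇑σ.symm ∧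
    (∀ (i : Fin m) (j : Fin n), m - r ≤ i.val → j.val < Fs.card → N.entry i j = 0) ∧
    r + Fs.card > max m n ∧
    (N.block 0 0 (m - r) Fs.card (by omega) (by have := card_le_n Fs; omega)).FRmR ∧
    (N.block (m - r) Fs.card r (n - Fs.card) (by omega)
      (by have := card_le_n Fs; omega)).FCmR

/-- `Fs` is a semifactor set of `M`: as a factor set but with a Medium zero block. -/
def IsSemifactorSet (M : ACIMatrix K ι m n) (Fs : Finset (Fin n)) : Prop :=
  ∃ (R : Matrix (Fin m) (Fin m) K) (σ : Equiv.Perm (Fin n)) (N : ACIMatrix K ι m n)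
    (r : ℕ) (hr : r ≤ m),
    IsUnit R ∧
    (∀ j : Fin n, j ∈ Fs ↔ (σ j).val < Fs.card) ∧
    N.entry = ((R.map MvPolynomial.C) * M.entry).submatrix id ⇑σ.symm ∧
    (∀ (i : Fin m) (j : Fin n), m - r ≤ i.val → j.val < Fs.card → N.entry i j = 0) ∧
    r + Fs.card = max m n ∧
    (N.block 0 0 (m - r) Fs.card (by omega) (by have := card_le_n Fs; omega)).FRmR ∧
    (N.block (m - r) Fs.card r (n - Fs.card) (by omega)
      (by have := card_le_n Fs; omega)).FCmR

end ACIMatrix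

section Aux

variable {K : Type} [Field K] {ι : Type}

lemma eval_congr_vars {p : MvPolynomial ι K} {v w : ι → K}
    (h : ∀ x ∈ p.vars, v x = w x) : eval v p = eval w p := by
  have := MvPolynomial.eval₂Hom_congr' (f₁ := RingHom.id K) (f₂ := RingHom.id K)
    (g₁ := v) (g₂ := w) (p₁ := p) (p₂ := p) rfl (fun i hi _ => h i hi) rfl
  exact this

lemma rank_eq_iff_surj {m n : ℕ} (X : Matrix (Fin m) (Fin n) K) :
    X.rank = m ↔ Function.Surjective X.mulVecLin := by
  rw [← LinearMap.range_eq_top]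
  constructor
  · intro h
    apply Submodule.eq_top_of_finrank_eq
    rw [show Module.finrank K (Fin m → K) = m from Module.finrank_fin_fun K]
    exact h
  · intro h
    show Module.finrank K (LinearMap.range X.mulVecLin) = m
    rw [h, finrank_top]
    exact Module.finrank_fin_fun K

lemma bddAbove_ranks {m n : ℕ} (M : ACIMatrix K ι m n) :
    BddAbove {r | ∃ v : ι → K, (M.completion v).rank = r} := by
  refine ⟨m, fun r hr => ?_⟩
  obtain ⟨v, rfl⟩ := hr
  exact Matrix.rank_le_height _

lemma FRmR_iff {m n : ℕ} (M : ACIMatrix K ι m n) :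
    M.FRmR ↔ ∃ v : ι → K, (M.completion v).rank = m := by
  constructor
  · intro h
    have hne : {r | ∃ v : ι → K, (M.completion v).rank = r}.Nonempty :=
      ⟨(M.completion 0).rank, 0, rfl⟩
    have := Nat.sSup_mem hne (bddAbove_ranks M)
    rw [show sSup {r | ∃ v : ι → K, (M.completion v).rank = r} = m from h] at this
    exact this
  · rintro ⟨v, hv⟩
    refine le_antisymm (csSup_le ⟨(M.completion 0).rank, 0, rfl⟩ ?_)
      (le_csSup (bddAbove_ranks M) ⟨v, hv⟩)
    rintro r ⟨w, rfl⟩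
    exact Matrix.rank_le_height _

end Aux

/-- If `M = [[A,B],[0,C]]` with `A` FRmR and `C` FRmR, then `M` is FRmR. -/
theorem FRmR_of_blocks {K : Type} [Field K] {ι : Type} {m₁ r s n₂ : ℕ}
    (M : ACIMatrix K ι (m₁ + r) (s + n₂))
    (hz : ∀ (i : Fin (m₁ + r)) (j : Fin (s + n₂)),
      m₁ ≤ i.val → j.val < s → M.entry i j = 0)
    (hA : (M.block 0 0 m₁ s (by omega) (by omega)).FRmR)
    (hC : (M.block m₁ s r n₂ (by omega) (by omega)).FRmR) :
    M.FRmR := by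
  classical
  obtain ⟨vA, hvA⟩ := (FRmR_iff _).1 hA
  obtain ⟨vC, hvC⟩ := (FRmR_iff _).1 hC
  -- variables appearing in some entry of a column with index < s
  set InA : ι → Prop := fun x => ∃ (i : Fin (m₁ + r)) (j : Fin (s + n₂)),
    (j : ℕ) < s ∧ x ∈ (M.entry i j).vars with hInA
  set v : ι → K := fun x => if InA x then vA x else vC x with hv
  -- the block completions under v
  set A' : Matrix (Fin m₁) (Fin s) K :=
    fun i j => M.completion v ⟨i.val, by omega⟩ ⟨j.val, by omega⟩ with hA'def
  set C' : Matrix (Fin r) (Fin n₂) K :=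
    fun i j => M.completion v ⟨m₁ + i.val, by omega⟩ ⟨s + j.val, by omega⟩ with hC'def
  set B' : Matrix (Fin m₁) (Fin n₂) K :=
    fun i j => M.completion v ⟨i.val, by omega⟩ ⟨s + j.val, by omega⟩ with hB'def
  have hAeq : A' = (M.block 0 0 m₁ s (by omega) (by omega)).completion vA := by
    funext i j
    simp only [hA'def, ACIMatrix.completion, ACIMatrix.block, ACIMatrix.subm,
      Matrix.submatrix_apply, Nat.zero_add]
    apply eval_congr_vars
    intro x hx
    have hInAx : InA x := ⟨⟨i.val, by omega⟩, ⟨j.val, by omega⟩, by simpa using j.isLt, hx⟩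
    simp [hv, hInAx]
  have hCeq : C' = (M.block m₁ s r n₂ (by omega) (by omega)).completion vC := by
    funext i j
    simp only [hC'def, ACIMatrix.completion, ACIMatrix.block, ACIMatrix.subm,
      Matrix.submatrix_apply]
    apply eval_congr_vars
    intro x hx
    have hnInA : ¬ InA x := by
      rintro ⟨i', j', hj', hx'⟩
      have hcol := M.colIndep x i' ⟨m₁ + i.val, by omega⟩ j' ⟨s + j.val, by omega⟩ hx' hx
      rw [hcol] at hj'
      simp only [] at hj'
      omega
    simp [hv, hnInA]
  have hAr : A'.rank = m₁ := by rw [hAeq]; exact hvA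
  have hCr : C'.rank = r := by rw [hCeq]; exact hvC
  have hAs := (rank_eq_iff_surj A').1 hAr
  have hCs := (rank_eq_iff_surj C').1 hCr
  rw [FRmR_iff]
  refine ⟨v, (rank_eq_iff_surj _).2 ?_⟩
  intro y
  obtain ⟨x₂, hx₂⟩ := hCs (fun i => y ⟨m₁ + i.val, by omega⟩)
  obtain ⟨x₁, hx₁⟩ := hAs (fun i => y ⟨i.val, by omega⟩ - (B'.mulVec x₂) i)
  refine ⟨fun j => if h : j.val < s then x₁ ⟨j.val, h⟩ else x₂ ⟨j.val - s, by omega⟩, ?_⟩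
  funext i
  have key : ∀ (i : Fin (m₁ + r)),
      (M.completion v).mulVec
        (fun j => if h : j.val < s then x₁ ⟨j.val, h⟩ else x₂ ⟨j.val - s, by omega⟩) i
      = (∑ j : Fin s, M.completion v i ⟨j.val, by omega⟩ * x₁ j)
        + (∑ j : Fin n₂, M.completion v i ⟨s + j.val, by omega⟩ * x₂ j) := by
    intro i
    show ∑ j : Fin (s + n₂), _ = _
    rw [Fin.sum_univ_add]
    congr 1
    · apply Finset.sum_congr rfl
      intro j _
      have hj : ((Fin.castAdd n₂ j : Fin (s + n₂)) : ℕ) < s := j.isLt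
      beta_reduce
      rw [dif_pos hj]
      have e1 : (Fin.castAdd n₂ j : Fin (s + n₂)) = ⟨j.val, by omega⟩ := by
        apply Fin.ext; rfl
      have e2 : (⟨((Fin.castAdd n₂ j : Fin (s + n₂)) : ℕ), hj⟩ : Fin s) = j := by
        apply Fin.ext; rfl
      rw [e2, e1]
    · apply Finset.sum_congr rfl
      intro j _
      have hj : ¬ ((Fin.natAdd s j : Fin (s + n₂)) : ℕ) < s := by
        simp only [Fin.natAdd]; omega
      beta_reduce
      rw [dif_neg hj]
      have e1 : (Fin.natAdd s j : Fin (s + n₂)) = ⟨s + j.val, by omega⟩ := by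
        apply Fin.ext; rfl
      have e2 : (⟨((Fin.natAdd s j : Fin (s + n₂)) : ℕ) - s, by omega⟩ : Fin n₂) = j := by
        apply Fin.ext; show s + j.val - s = j.val; omega
      rw [e2, e1]
  show (M.completion v).mulVec _ i = y i
  rw [key]
  by_cases hi : i.val < m₁
  · have h1 : ∑ j : Fin s, M.completion v i ⟨j.val, by omega⟩ * x₁ j
        = (A'.mulVec x₁) ⟨i.val, hi⟩ := by
      apply Finset.sum_congr rfl
      intro j _
      rfl
    have h2 : ∑ j : Fin n₂, M.completion v i ⟨s + j.val, by omega⟩ * x₂ j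
        = (B'.mulVec x₂) ⟨i.val, hi⟩ := by
      apply Finset.sum_congr rfl
      intro j _
      rfl
    rw [h1, h2]
    have hfin : (⟨(⟨i.val, hi⟩ : Fin m₁).val, by omega⟩ : Fin (m₁ + r)) = i := rfl
    have hthis := congrFun hx₁ ⟨i.val, hi⟩
    simp only [Matrix.mulVecLin_apply] at hthis
    rw [hthis, hfin]
    ring
  · have h1 : ∑ j : Fin s, M.completion v i ⟨j.val, by omega⟩ * x₁ j = 0 := by
      apply Finset.sum_eq_zero
      intro j _
      have hz' : M.entry i ⟨j.val, by omega⟩ = 0 := hz i _ (by omega) j.isLt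
      show eval v (M.entry i ⟨j.val, by omega⟩) * x₁ j = 0
      rw [hz']
      simp
    have h2 : ∑ j : Fin n₂, M.completion v i ⟨s + j.val, by omega⟩ * x₂ j
        = (C'.mulVec x₂) ⟨i.val - m₁, by omega⟩ := by
      apply Finset.sum_congr rfl
      intro j _
      congr 2
      apply Fin.ext; simp; omega
    rw [h1, h2]
    have := congrFun hx₂ ⟨i.val - m₁, by omega⟩
    simp only [Matrix.mulVecLin_apply] at this
    rw [this]
    have hfin : (⟨m₁ + (⟨i.val - m₁, by omega⟩ : Fin r).val, by omega⟩ : Fin (m₁ + r)) = i := by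
      apply Fin.ext; simp; omega
    rw [hfin]
    simp
end

section
/- There exists an ACI-matrix with linearly independent rows that is not FRmR. For example, over any field the 3×4 matrix with rows (1,1,1,1), (1,1,1,x), (1,1,1,y) (x, y indeterminates in the fourth column) has linearly independent rows but maxRank equal to 2. -/
open MvPolynomial

namespace ACIExample

variable (K : Type) [Field K]

/-- The example matrix's entries. -/
noncomputable def Eent : Matrix (Fin 3) (Fin 4) (MvPolynomial (Fin 2) K) :=
  fun i j => if j.val = 3 then
      (if i.val = 0 then 1 else if i.val = 1 then X 0 else X 1)
    else 1

lemma Eent_vars {x : Fin 2} {i : Fin 3} {j : Fin 4} (h : x ∈ (Eent K i j).vars) :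
    j.val = 3 := by
  by_contra hj
  simp [Eent, hj, MvPolynomial.vars_one] at h

/-- The example ACI matrix. -/
noncomputable def Mex : ACIMatrix K (Fin 2) 3 4 where
  entry := Eent K
  deg_le i j := by
    unfold Eent
    split_ifs <;>
      simp [MvPolynomial.totalDegree_one, MvPolynomial.totalDegree_X]
  colIndep x i i' j j' h h' := Fin.ext ((Eent_vars K h).trans (Eent_vars K h').symm)

lemma rank_le_two (v : Fin 2 → K) : ((Mex K).completion v).rank ≤ 2 := by
  set A : Matrix (Fin 3) (Fin 2) K :=
    fun i k => if k.val = 0 then 1 else (Mex K).completion v i 3 with hA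
  set B : Matrix (Fin 2) (Fin 4) K := !![1,1,1,0;0,0,0,1] with hB
  have hfac : (Mex K).completion v = A * B := by
    ext i j
    rw [Matrix.mul_apply]
    fin_cases j <;>
      simp [Matrix.mul_apply, Fin.sum_univ_two, hA, hB, ACIMatrix.completion,
        Mex, Eent]
  calc ((Mex K).completion v).rank = (A * B).rank := by rw [hfac]
    _ ≤ A.rank := Matrix.rank_mul_le_left A B
    _ ≤ 2 := Matrix.rank_le_width A

lemma rank_zero_eq_two : ((Mex K).completion (fun _ => 0)).rank = 2 := by
  set Cm := (Mex K).completion (fun _ => 0) with hC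
  have hcol : ∀ j : Fin 4, Cm.transpose j =
      (if j.val = 3 then (fun i : Fin 3 => if i.val = 0 then (1:K) else 0)
        else fun _ => 1) := by
    intro j
    funext i
    fin_cases j <;> fin_cases i <;>
      simp [hC, ACIMatrix.completion, Mex, Eent, Matrix.transpose_apply,
        show ((3:Fin 4):ℕ) = 3 from rfl, MvPolynomial.constantCoeff_X]
  set b : Fin 2 → (Fin 3 → K) :=
    ![fun _ => 1, fun i => if i.val = 0 then 1 else 0] with hb
  have hrange : Set.range Cm.transpose = Set.range b := by
    ext w
    constructor
    · rintro ⟨j, rfl⟩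
      rw [hcol]
      fin_cases j
      · exact ⟨0, rfl⟩
      · exact ⟨0, rfl⟩
      · exact ⟨0, rfl⟩
      · exact ⟨1, rfl⟩
    · rintro ⟨k, rfl⟩
      fin_cases k
      · exact ⟨0, by rw [hcol]; rfl⟩
      · exact ⟨3, by rw [hcol]; rfl⟩
  have hli : LinearIndependent K b := by
    rw [hb]
    rw [LinearIndependent.pair_iff]
    intro s t hst
    have h1 := congrFun hst 1
    have h0 := congrFun hst 0
    simp [Pi.add_apply] at h1 h0
    refine ⟨h1, ?_⟩
    linear_combination h0 - h1
  rw [hC, Matrix.rank_eq_finrank_span_cols, ← hC, show Cm.col = Cm.transpose from rfl, hrange,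
    finrank_span_eq_card hli, Fintype.card_fin]

lemma maxRank_eq_two : (Mex K).maxRank = 2 := by
  unfold ACIMatrix.maxRank
  have hmem : (2 : ℕ) ∈ {r | ∃ v : Fin 2 → K, ((Mex K).completion v).rank = r} :=
    ⟨fun _ => 0, rank_zero_eq_two K⟩
  have hub : ∀ r ∈ {r | ∃ v : Fin 2 → K, ((Mex K).completion v).rank = r}, r ≤ 2 := by
    rintro r ⟨v, rfl⟩
    exact rank_le_two K v
  exact le_antisymm (csSup_le ⟨2, hmem⟩ hub) (le_csSup ⟨2, hub⟩ hmem)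

lemma rows_li : LinearIndependent K
    (fun i : Fin 3 => fun j : Fin 4 => (Mex K).entry i j) := by
  rw [Fintype.linearIndependent_iff]
  intro g hg
  have h0 := congrFun hg ⟨0, by norm_num⟩
  have h3 := congrFun hg ⟨3, by norm_num⟩
  simp [Fin.sum_univ_three, Mex, Eent, show ((3:Fin 4):ℕ) = 3 from rfl,
    show ((0:Fin 4):ℕ) = 0 from rfl] at h0 h3
  -- h0 : g 0 • 1 + g 1 • 1 + g 2 • 1 = 0 in MvPolynomial
  have hsum : g 0 + g 1 + g 2 = 0 := by
    have := congrArg (MvPolynomial.coeff 0) h0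
    simpa [MvPolynomial.smul_eq_C_mul, MvPolynomial.coeff_C] using this
  have hg1 : g 1 = 0 := by
    have := congrArg (MvPolynomial.coeff (Finsupp.single (0 : Fin 2) 1)) h3
    simpa [MvPolynomial.smul_eq_C_mul, MvPolynomial.coeff_C_mul,
      MvPolynomial.coeff_X', MvPolynomial.coeff_C, Finsupp.single_eq_single_iff,
      eq_comm (a := (0 : Fin 2 →₀ ℕ)), Finsupp.single_eq_zero]
      using this
  have hg2 : g 2 = 0 := by
    have := congrArg (MvPolynomial.coeff (Finsupp.single (1 : Fin 2) 1)) h3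
    simpa [MvPolynomial.smul_eq_C_mul, MvPolynomial.coeff_C_mul,
      MvPolynomial.coeff_X', MvPolynomial.coeff_C, Finsupp.single_eq_single_iff,
      eq_comm (a := (0 : Fin 2 →₀ ℕ)), Finsupp.single_eq_zero]
      using this
  have hg0 : g 0 = 0 := by linear_combination hsum - hg1 - hg2
  intro i
  fin_cases i <;> assumption

end ACIExample

/-- there is an ACI-matrix with linearly independent rows that is not FRmR:
over any field, the 3×4 matrix with rows (1,1,1,1), (1,1,1,x), (1,1,1,y) has linearly
independent rows and maxRank 2. -/


theorem exists_linearIndependent_not_FRmR (K : Type) [Field K] :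
    ∃ M : ACIMatrix K (Fin 2) 3 4,
      (∀ (i : Fin 3) (j : Fin 4), M.entry i j =
        if j.val = 3 then
          (if i.val = 0 then 1 else if i.val = 1 then X 0 else X 1)
        else 1) ∧
      LinearIndependent K (fun i : Fin 3 => fun j : Fin 4 => M.entry i j) ∧
      M.maxRank = 2 ∧ ¬ M.FRmR := by
  refine ⟨ACIExample.Mex K, fun i j => rfl, ACIExample.rows_li K,
    ACIExample.maxRank_eq_two K, ?_⟩
  intro h
  have := (ACIExample.maxRank_eq_two K).symm.trans h
  norm_num at this
end

section
/- Let M1 = [[A1,B1],[0,C1]] and M2 = [[A2,B2],[0,C2]] be m×n ACI-matrices with A1 and A2 having the same number of columns, and suppose M2 = R · M1 · diag(Q, Q') for a nonsingular constant R and permutation matrices Q, Q'. If A1 and A2 both have linearly independent rows, then A1 is equivalent to A2 and C1 is equivalent to C2. -/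
open MvPolynomial

lemma fin_mk_zero_add {sz : ℕ} (a : ℕ) (h : 0 + a < sz) :
    (⟨0 + a, h⟩ : Fin sz) = ⟨a, by omega⟩ := Fin.ext (Nat.zero_add a)

lemma aux_card_le_of_span {K V : Type*} [Field K] [AddCommGroup V] [Module K V] {a b : ℕ}
    {v : Fin a → V} {w : Fin b → V} (hv : LinearIndependent K v)
    (h : ∀ i, v i ∈ Submodule.span K (Set.range w)) : a ≤ b := by
  set S := Submodule.span K (Set.range w) with hS
  haveI : FiniteDimensional K S := FiniteDimensional.span_of_finite K (Set.finite_range w)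
  have hv' : LinearIndependent K (fun i => (⟨v i, h i⟩ : S)) := by
    apply LinearIndependent.of_comp S.subtype
    exact hv
  have h1 := hv'.fintype_card_le_finrank
  have h2 : Module.finrank K S ≤ b := by
    have := finrank_range_le_card (R := K) w
    simpa [Set.finrank] using this
  simpa using h1.trans h2

/-- if `M₂ = R · M₁ · diag(Q,Q')` for two block ACI-matrices
`Mₖ = [[Aₖ,Bₖ],[0,Cₖ]]` whose upper-left blocks have the same number of columns and
linearly independent rows, then `A₁ ∼ A₂` and `C₁ ∼ C₂` (in particular the sizes agree). -/
theorem blocks_equiv_of_linearIndependent {K : Type} [Field K] {ι : Type}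
    {r₁ t₁ r₂ t₂ n₁ n₂ : ℕ}
    (M₁ : ACIMatrix K ι (r₁ + t₁) (n₁ + n₂)) (M₂ : ACIMatrix K ι (r₂ + t₂) (n₁ + n₂))
    (hm : r₁ + t₁ = r₂ + t₂)
    (R : Matrix (Fin (r₂ + t₂)) (Fin (r₂ + t₂)) K) (hR : IsUnit R)
    (Q : Equiv.Perm (Fin n₁)) (Q' : Equiv.Perm (Fin n₂))
    (hz₁ : ∀ (i : Fin (r₁ + t₁)) (j : Fin (n₁ + n₂)),
      r₁ ≤ i.val → j.val < n₁ → M₁.entry i j = 0)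
    (hz₂ : ∀ (i : Fin (r₂ + t₂)) (j : Fin (n₁ + n₂)),
      r₂ ≤ i.val → j.val < n₁ → M₂.entry i j = 0)
    (hM₂ : M₂.entry = ((R.map MvPolynomial.C) *
      (M₁.entry.submatrix (Fin.cast hm.symm) id)).submatrix id
        ⇑(Equiv.trans (Equiv.trans finSumFinEquiv.symm (Equiv.sumCongr Q Q')) finSumFinEquiv))
    (hA₁ : LinearIndependent K (fun i : Fin r₁ => fun j : Fin n₁ =>
      (M₁.block 0 0 r₁ n₁ (by omega) (by omega)).entry i j))
    (hA₂ : LinearIndependent K (fun i : Fin r₂ => fun j : Fin n₁ =>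
      (M₂.block 0 0 r₂ n₁ (by omega) (by omega)).entry i j)) :
    ∃ (h₁ : r₁ = r₂) (h₂ : t₁ = t₂),
      ACIMatrix.MEquiv (ACIMatrix.castSize h₁ rfl (M₁.block 0 0 r₁ n₁ (by omega) (by omega)))
        (M₂.block 0 0 r₂ n₁ (by omega) (by omega)) ∧
      ACIMatrix.MEquiv (ACIMatrix.castSize h₂ rfl (M₁.block r₁ n₁ t₁ n₂ (by omega) (by omega)))
        (M₂.block r₂ n₁ t₂ n₂ (by omega) (by omega)) := by
  classical
  set σ := (Equiv.trans (Equiv.trans finSumFinEquiv.symm (Equiv.sumCongr Q Q')) finSumFinEquiv) with hσ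
  have hσ1 : ∀ j : Fin n₁, σ (Fin.castAdd n₂ j) = Fin.castAdd n₂ (Q j) := by
    intro j
    simp [hσ, Equiv.trans_apply, finSumFinEquiv_symm_apply_castAdd]
  have hσ2 : ∀ j : Fin n₂, σ (Fin.natAdd n₁ j) = Fin.natAdd n₁ (Q' j) := by
    intro j
    simp [hσ, Equiv.trans_apply, finSumFinEquiv_symm_apply_natAdd]
  have hE : ∀ i j, M₂.entry i j = ∑ k : Fin (r₂ + t₂),
      MvPolynomial.C (R i k) * M₁.entry (Fin.cast hm.symm k) (σ j) := by
    intro i j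
    rw [hM₂]
    simp [Matrix.mul_apply, Matrix.submatrix, Matrix.map]
    rfl
  have hEsplit : ∀ i j, M₂.entry i j =
      (∑ k : Fin r₁, MvPolynomial.C (R i (finCongr hm (Fin.castAdd t₁ k))) *
        M₁.entry (Fin.castAdd t₁ k) (σ j)) +
      (∑ k : Fin t₁, MvPolynomial.C (R i (finCongr hm (Fin.natAdd r₁ k))) *
        M₁.entry (Fin.natAdd r₁ k) (σ j)) := by
    intro i j
    rw [hE i j, ← Equiv.sum_comp (finCongr hm)
      (fun k => MvPolynomial.C (R i k) * M₁.entry (Fin.cast hm.symm k) (σ j)),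
      Fin.sum_univ_add]
    rfl
  -- rows of A₁
  set rowA₁ : Fin r₁ → (Fin n₁ → MvPolynomial ι K) :=
    fun k j => M₁.entry (Fin.castAdd t₁ k) (Fin.castAdd n₂ j) with hrowA₁
  have hA₁' : LinearIndependent K rowA₁ := by
    convert hA₁ using 2 with k
    funext j
    show M₁.entry _ _ = M₁.entry _ _
    congr 1 <;> exact Fin.ext (Nat.zero_add _).symm
  set rowA₂ : Fin r₂ → (Fin n₁ → MvPolynomial ι K) :=
    fun k j => M₂.entry (Fin.castAdd t₂ k) (Fin.castAdd n₂ j) with hrowA₂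
  have hA₂' : LinearIndependent K rowA₂ := by
    convert hA₂ using 2 with k
    funext j
    show M₂.entry _ _ = M₂.entry _ _
    congr 1 <;> exact Fin.ext (Nat.zero_add _).symm
  have hE1 : ∀ (i : Fin (r₂ + t₂)) (j : Fin n₁), M₂.entry i (Fin.castAdd n₂ j) =
      ∑ k : Fin r₁, MvPolynomial.C (R i (finCongr hm (Fin.castAdd t₁ k))) * rowA₁ k (Q j) := by
    intro i j
    rw [hEsplit i (Fin.castAdd n₂ j), hσ1 j]
    have : ∀ k : Fin t₁, M₁.entry (Fin.natAdd r₁ k) (Fin.castAdd n₂ (Q j)) = 0 := by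
      intro k
      exact hz₁ _ _ (Nat.le_add_right _ _) (Q j).isLt
    simp [this]
    rfl
  -- R21 = 0
  have hR21 : ∀ (i : Fin t₂) (k : Fin r₁),
      R (Fin.natAdd r₂ i) (finCongr hm (Fin.castAdd t₁ k)) = 0 := by
    intro i k
    have hzero : ∀ j : Fin n₁,
        ∑ l : Fin r₁, (R (Fin.natAdd r₂ i) (finCongr hm (Fin.castAdd t₁ l))) • rowA₁ l j = 0 := by
      intro j
      have h1 := hE1 (Fin.natAdd r₂ i) (Q.symm j)
      rw [hz₂ _ _ (Nat.le_add_right _ _) (Q.symm j).isLt] at h1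
      simp only [Equiv.apply_symm_apply] at h1
      simp only [MvPolynomial.smul_eq_C_mul]
      exact h1.symm
    have := Fintype.linearIndependent_iff.mp hA₁'
      (fun l => R (Fin.natAdd r₂ i) (finCongr hm (Fin.castAdd t₁ l))) ?_ k
    · exact this
    · funext j
      simpa using hzero j
  -- r₁ ≤ r₂ via columns of R
  have hr12 : r₁ ≤ r₂ := by
    apply aux_card_le_of_span (K := K)
      (v := fun k (i : Fin (r₂ + t₂)) => R i (finCongr hm (Fin.castAdd t₁ k)))
      (w := fun (i : Fin r₂) => Pi.single (M := fun _ => K) (Fin.castAdd t₂ i) 1)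
    · have hcols := Matrix.linearIndependent_cols_iff_isUnit.mpr hR
      have hinj : Function.Injective (fun k : Fin r₁ => finCongr hm (Fin.castAdd t₁ k)) := by
        intro a b hab
        simpa [Fin.ext_iff] using hab
      exact hcols.comp _ hinj
    · intro k
      have hexp : (fun i => R i (finCongr hm (Fin.castAdd t₁ k))) =
          ∑ i : Fin r₂, R (Fin.castAdd t₂ i) (finCongr hm (Fin.castAdd t₁ k)) •
            Pi.single (M := fun _ => K) (Fin.castAdd t₂ i) 1 := by
        funext x
        rw [Finset.sum_apply]
        induction x using Fin.addCases with
        | left x₀ =>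
          simp [Pi.single_apply, Finset.sum_ite_eq]
        | right x₀ =>
          rw [hR21 x₀ k]
          symm
          apply Finset.sum_eq_zero
          intro i _
          rw [Pi.smul_apply, Pi.single_apply, if_neg (by simp [Fin.ext_iff]; omega), smul_zero]
      rw [hexp]
      exact Submodule.sum_mem _ (fun i _ => Submodule.smul_mem _ _
        (Submodule.subset_span ⟨i, rfl⟩))
  -- r₂ ≤ r₁ via rows of A₂
  have hr21 : r₂ ≤ r₁ := by
    apply aux_card_le_of_span (K := K) (v := rowA₂) (w := fun k j => rowA₁ k (Q j)) hA₂'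
    intro i
    have : rowA₂ i = ∑ k : Fin r₁,
        (R (Fin.castAdd t₂ i) (finCongr hm (Fin.castAdd t₁ k))) • (fun j => rowA₁ k (Q j)) := by
      funext j
      rw [Finset.sum_apply]
      simp only [Pi.smul_apply, MvPolynomial.smul_eq_C_mul]
      exact hE1 (Fin.castAdd t₂ i) j
    rw [this]
    exact Submodule.sum_mem _ (fun k _ => Submodule.smul_mem _ _
      (Submodule.subset_span ⟨k, rfl⟩))
  have h₁ : r₁ = r₂ := le_antisymm hr12 hr21
  have h₂ : t₁ = t₂ := by omega
  subst h₁
  subst h₂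
  set R11 : Matrix (Fin r₁) (Fin r₁) K :=
    fun i j => R (Fin.castAdd t₁ i) (Fin.castAdd t₁ j) with hR11d
  set R12 : Matrix (Fin r₁) (Fin t₁) K :=
    fun i j => R (Fin.castAdd t₁ i) (Fin.natAdd r₁ j) with hR12d
  set R22 : Matrix (Fin t₁) (Fin t₁) K :=
    fun i j => R (Fin.natAdd r₁ i) (Fin.natAdd r₁ j) with hR22d
  have hRB : R = (Matrix.fromBlocks R11 R12 0 R22).submatrix
      finSumFinEquiv.symm finSumFinEquiv.symm := by
    funext i j
    induction i using Fin.addCases with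
    | left i₀ =>
      induction j using Fin.addCases with
      | left j₀ =>
        simp only [Matrix.submatrix_apply, finSumFinEquiv_symm_apply_castAdd,
          Matrix.fromBlocks_apply₁₁]
        rfl
      | right j₀ =>
        simp only [Matrix.submatrix_apply, finSumFinEquiv_symm_apply_castAdd,
          finSumFinEquiv_symm_apply_natAdd, Matrix.fromBlocks_apply₁₂]
        rfl
    | right i₀ =>
      induction j using Fin.addCases with
      | left j₀ =>
        simp only [Matrix.submatrix_apply, finSumFinEquiv_symm_apply_castAdd,
          finSumFinEquiv_symm_apply_natAdd, Matrix.fromBlocks_apply₂₁, Matrix.zero_apply]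
        exact hR21 i₀ j₀
      | right j₀ =>
        simp only [Matrix.submatrix_apply, finSumFinEquiv_symm_apply_natAdd,
          Matrix.fromBlocks_apply₂₂]
        rfl
  have hdetu := (Matrix.isUnit_iff_isUnit_det R).mp hR
  rw [hRB, Matrix.det_submatrix_equiv_self, Matrix.det_fromBlocks_zero₂₁] at hdetu
  obtain ⟨hu1, hu2⟩ := IsUnit.mul_iff.mp hdetu
  have hU11 : IsUnit R11 := (Matrix.isUnit_iff_isUnit_det R11).mpr hu1
  have hU22 : IsUnit R22 := (Matrix.isUnit_iff_isUnit_det R22).mpr hu2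
  have keyA : ∀ (i : Fin r₁) (j : Fin n₁),
      M₂.entry (Fin.castAdd t₁ i) (Fin.castAdd n₂ j) =
      ∑ k : Fin r₁, MvPolynomial.C (R11 i k) *
        M₁.entry (Fin.castAdd t₁ k) (Fin.castAdd n₂ (Q j)) := by
    intro i j
    rw [hE1 (Fin.castAdd t₁ i) j]
    rfl
  have keyA' : ∀ (i : Fin r₁) (j : Fin n₁),
      M₂.entry ⟨0 + (i : ℕ), by omega⟩ ⟨0 + (j : ℕ), by omega⟩ =
      ∑ k : Fin r₁, MvPolynomial.C (R11 i k) *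
        M₁.entry ⟨0 + (k : ℕ), by omega⟩ ⟨0 + ((Q j) : ℕ), by omega⟩ := by
    intro i j
    simp only [fin_mk_zero_add]
    exact keyA i j
  have keyC : ∀ (i : Fin t₁) (j : Fin n₂),
      M₂.entry (Fin.natAdd r₁ i) (Fin.natAdd n₁ j) =
      ∑ k : Fin t₁, MvPolynomial.C (R22 i k) *
        M₁.entry (Fin.natAdd r₁ k) (Fin.natAdd n₁ (Q' j)) := by
    intro i j
    rw [hEsplit (Fin.natAdd r₁ i) (Fin.natAdd n₁ j), hσ2 j]
    have h0 : ∀ k : Fin r₁, MvPolynomial.C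
        (R (Fin.natAdd r₁ i) (finCongr hm (Fin.castAdd t₁ k))) *
        M₁.entry (Fin.castAdd t₁ k) (Fin.natAdd n₁ (Q' j)) = 0 := by
      intro k
      rw [hR21 i k]
      simp
    rw [Finset.sum_congr rfl (fun k _ => h0 k)]
    simp only [Finset.sum_const_zero, zero_add]
    rfl
  refine ⟨rfl, rfl, ⟨R11, Q, hU11, ?_⟩, ⟨R22, Q', hU22, ?_⟩⟩
  · funext i j
    exact keyA' i j
  · funext i j
    exact keyC i j
end

section
/- If R M Q_F = [[A,B],[0,C]] is an F-decomposition of an ACI-matrix M (zero block Big, A FRmR, C FCmR), and P M Q_F = [[A',B'],[0,C']] is another block decomposition with the same column split in which P is a permutation matrix and A' has linearly independent rows, then the second decomposition is also an F-decomposition: its zero block is Big, A' is FRmR, and C' is FCmR. The analogous statement holds with 'semifactor set', 'Medium zero block' in place of 'factor set', 'Big zero block'. -/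
open MvPolynomial

/-!
Both decompositions come from `M` by an invertible row operation and a column permutation that
respects the split `F | Fᶜ`, so `[[A,B],[0,C]] = S [[A',B'],[0,C']] Π` with `S` invertible and
`Π = Π₁ ⊕ Π₂`. Splitting the rows of `S` like those of `[[A,B],[0,C]]` and its columns like those
of `[[A',B'],[0,C']]`, this gives `A = S₁₁ A' Π₁` and `0 = S₂₁ A' Π₁`. Since the rows of `A'` are
independent, `S₂₁ = 0`; since those of `A` are independent too (`A` is FRmR), `A` has at most as
many rows as `A'`. Running the argument on `[[A',B'],[0,C']] = S⁻¹ [[A,B],[0,C]] Π⁻¹` shows that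
the two zero blocks have the same height. So `S` is block upper triangular with invertible
diagonal blocks, and `A = S₁₁ A' Π₁`, `C = S₂₂ C' Π₂` have the maxRanks of `A'` and `C'`.
-/

open Matrix

section BlockTriangular

variable {K A : Type*} [Field K] [Ring A] [Algebra K A]

theorem Matrix.map_algebraMap_mul_apply {l m n : Type*} [Fintype l] (T : Matrix m l K)
    (X : Matrix l n A) (i : m) : (T.map (algebraMap K A) * X) i = ∑ j, T i j • X j := by
  ext b
  simp [mul_apply, Finset.sum_apply, Algebra.smul_def]

theorem Matrix.eq_zero_of_map_algebraMap_mul_eq_zero {l m n : Type*} [Fintype l]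
    {T : Matrix m l K} {X : Matrix l n A} (hX : LinearIndependent K X.row)
    (h : T.map (algebraMap K A) * X = 0) : T = 0 := by
  ext i j
  rw [Fintype.linearIndependent_iff] at hX
  exact hX (T i) (by rw [row, ← map_algebraMap_mul_apply, h]; rfl) j

theorem Matrix.linearIndependent_of_map_algebraMap_mul_submatrix {l m n : Type*} [Fintype l]
    {T : Matrix m l K} {X : Matrix l n A} {ρ : Equiv.Perm n}
    (h : LinearIndependent K ((T.map (algebraMap K A) * X).submatrix id ρ).row) :
    LinearIndependent K T.row := by
  refine .of_comp (LinearMap.funLeft K A ρ ∘ₗ Fintype.linearCombination K X.row) ?_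
  convert h using 1
  funext i b
  simp [Fintype.linearCombination_apply, map_algebraMap_mul_apply, Finset.sum_apply]

theorem Matrix.toBlocks_map_mul_submatrix_sumCongr {R : Type*} [Semiring R] (f : R →+* A)
    {k₁ k₂ l₁ l₂ n₁ n₂ : Type*} [Fintype l₁] [Fintype l₂]
    (S : Matrix (k₁ ⊕ k₂) (l₁ ⊕ l₂) R) (X : Matrix (l₁ ⊕ l₂) (n₁ ⊕ n₂) A)
    (ρ₁ : Equiv.Perm n₁) (ρ₂ : Equiv.Perm n₂) (hX : X.toBlocks₂₁ = 0) :
    (S.map f * X).submatrix id (Equiv.sumCongr ρ₁ ρ₂) =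
      fromBlocks ((S.toBlocks₁₁.map f * X.toBlocks₁₁).submatrix id ρ₁)
        ((S.toBlocks₁₁.map f * X.toBlocks₁₂ + S.toBlocks₁₂.map f * X.toBlocks₂₂).submatrix id ρ₂)
        ((S.toBlocks₂₁.map f * X.toBlocks₁₁).submatrix id ρ₁)
        ((S.toBlocks₂₁.map f * X.toBlocks₁₂ + S.toBlocks₂₂.map f * X.toBlocks₂₂).submatrix id
          ρ₂) := by
  rw [← fromBlocks_toBlocks X, ← fromBlocks_toBlocks S, hX, fromBlocks_map, fromBlocks_multiply]
  ext (i | i) (j | j) <;> simp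

theorem Matrix.card_le_and_toBlocks₂₁_eq_zero_of_eq_map_mul_submatrix
    {k₁ k₂ l₁ l₂ n₁ n₂ : Type*} [Fintype k₁] [Fintype l₁] [Fintype l₂]
    {S : Matrix (k₁ ⊕ k₂) (l₁ ⊕ l₂) K} {X : Matrix (l₁ ⊕ l₂) (n₁ ⊕ n₂) A}
    {Y : Matrix (k₁ ⊕ k₂) (n₁ ⊕ n₂) A} {ρ₁ : Equiv.Perm n₁} {ρ₂ : Equiv.Perm n₂}
    (hY : Y = (S.map (algebraMap K A) * X).submatrix id (Equiv.sumCongr ρ₁ ρ₂))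
    (hX₂₁ : X.toBlocks₂₁ = 0) (hY₂₁ : Y.toBlocks₂₁ = 0)
    (hX₁₁ : LinearIndependent K X.toBlocks₁₁.row) (hY₁₁ : LinearIndependent K Y.toBlocks₁₁.row) :
    Fintype.card k₁ ≤ Fintype.card l₁ ∧ S.toBlocks₂₁ = 0 := by
  rw [hY, toBlocks_map_mul_submatrix_sumCongr _ _ _ _ _ hX₂₁] at hY₁₁ hY₂₁
  rw [toBlocks_fromBlocks₁₁] at hY₁₁
  rw [toBlocks_fromBlocks₂₁] at hY₂₁
  refine ⟨?_, eq_zero_of_map_algebraMap_mul_eq_zero hX₁₁ ?_⟩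
  · simpa using (linearIndependent_of_map_algebraMap_mul_submatrix hY₁₁).fintype_card_le_finrank
  · ext i j
    simpa using congrFun₂ hY₂₁ i (ρ₁.symm j)

end BlockTriangular

def finSplitEquiv {m p q : ℕ} (h : p + q = m) : Fin m ≃ Fin p ⊕ Fin q :=
  (finCongr h.symm).trans finSumFinEquiv.symm

section finSplitEquiv

variable {m p q : ℕ} (h : p + q = m)

@[simp]
theorem val_finSplitEquiv_symm_inl (a : Fin p) : ((finSplitEquiv h).symm (.inl a)).val = a.val :=
  rfl

@[simp]
theorem val_finSplitEquiv_symm_inr (b : Fin q) :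
    ((finSplitEquiv h).symm (.inr b)).val = p + b.val :=
  rfl

theorem finSplitEquiv_mem_range_inl_iff (i : Fin m) :
    finSplitEquiv h i ∈ Set.range Sum.inl ↔ i.val < p := by
  have hi := congrArg Fin.val ((finSplitEquiv h).symm_apply_apply i)
  rcases hx : finSplitEquiv h i with a | b <;> rw [hx] at hi
  · simp [← hi]
  · simp only [val_finSplitEquiv_symm_inr] at hi
    simp
    omega

theorem exists_permCongr_finSplitEquiv_eq_sumCongr (π : Equiv.Perm (Fin m))
    (hπ : ∀ j, j.val < p → (π j).val < p) :
    ∃ (ρ₁ : Equiv.Perm (Fin p)) (ρ₂ : Equiv.Perm (Fin q)),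
      (finSplitEquiv h).permCongr π = Equiv.sumCongr ρ₁ ρ₂ := by
  have hmaps :
      Set.MapsTo ((finSplitEquiv h).permCongr π) (Set.range Sum.inl) (Set.range Sum.inl) := by
    rintro _ ⟨a, rfl⟩
    rw [Equiv.permCongr_apply, finSplitEquiv_mem_range_inl_iff]
    exact hπ _ (by simp)
  obtain ⟨⟨ρ₁, ρ₂⟩, hρ⟩ := Equiv.Perm.mem_sumCongrHom_range_of_perm_mapsTo_inl hmaps
  exact ⟨ρ₁, ρ₂, hρ.symm⟩

end finSplitEquiv

namespace Matrix

variable {α : Type*} {m n p q p' q' : ℕ}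

theorem toBlocks₂₁_reindex_finSplitEquiv_eq_zero [Zero α] {X : Matrix (Fin m) (Fin n) α}
    (hp : p + p' = m) (hq : q + q' = n) (hX : ∀ i j, p ≤ i.val → j.val < q → X i j = 0) :
    (X.reindex (finSplitEquiv hp) (finSplitEquiv hq)).toBlocks₂₁ = 0 := by
  ext i j
  exact hX _ _ (by simp) (by simp)

theorem reindex_map_mul_submatrix {k l c k' l' c' R A : Type*} [Fintype l] [Fintype l']
    [Semiring R] [Semiring A] (f : R →+* A) (S : Matrix k l R) (X : Matrix l c A)
    (π : Equiv.Perm c) (e₁ : k ≃ k') (e₂ : l ≃ l') (e₃ : c ≃ c') :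
    ((S.map f * X).submatrix id π).reindex e₁ e₃ =
      ((S.reindex e₁ e₂).map f * X.reindex e₂ e₃).submatrix id (e₃.permCongr π) := by
  ext i j
  simp only [reindex_apply, submatrix_apply, mul_apply, map_apply, id, Equiv.permCongr_apply,
    Equiv.symm_apply_apply]
  exact (Equiv.sum_comp e₂.symm _).symm

theorem eq_map_nonsing_inv_mul_submatrix {k c R A : Type*} [Fintype k] [DecidableEq k]
    [CommRing R] [Semiring A] (f : R →+* A) {S : Matrix k k R} (hS : IsUnit S)
    {X Y : Matrix k c A} {π : Equiv.Perm c} (hY : Y = (S.map f * X).submatrix id π) :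
    X = (S⁻¹.map f * Y).submatrix id π.symm := by
  have hcomm : (S⁻¹.map f * Y).submatrix id π.symm = S⁻¹.map f * Y.submatrix id π.symm := by
    ext i j
    simp [mul_apply]
  rw [hcomm, hY, submatrix_submatrix]
  simp [← Matrix.mul_assoc, ← Matrix.map_mul, nonsing_inv_mul _ ((isUnit_iff_isUnit_det S).mp hS)]

end Matrix

namespace ACIMatrix

variable {K : Type} [Field K] {ι : Type} {m n p q p' q' : ℕ}

theorem bddAbove_rank_completion (M : ACIMatrix K ι m n) :
    BddAbove {r | ∃ v : ι → K, (M.completion v).rank = r} :=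
  ⟨m, by rintro _ ⟨v, rfl⟩; exact (M.completion v).rank_le_height⟩

theorem exists_rank_completion_eq_maxRank (M : ACIMatrix K ι m n) :
    ∃ v : ι → K, (M.completion v).rank = M.maxRank :=
  Nat.sSup_mem (s := {r | ∃ v : ι → K, (M.completion v).rank = r}) ⟨_, 0, rfl⟩
    M.bddAbove_rank_completion

theorem FRmR.linearIndependent_row_entry {M : ACIMatrix K ι m n} (h : M.FRmR) :
    LinearIndependent K M.entry.row := by
  obtain ⟨v, hv⟩ := M.exists_rank_completion_eq_maxRank
  have hli : LinearIndependent K (M.completion v).row := by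
    rw [linearIndependent_iff_card_eq_finrank_span, Set.finrank, ← rank_eq_finrank_span_row,
      hv, h, Fintype.card_fin]
  exact LinearIndependent.of_comp ((aeval v).toLinearMap.compLeft (Fin n)) hli

theorem MEquiv.maxRank_eq {M M' : ACIMatrix K ι m n} (h : M.MEquiv M') :
    M'.maxRank = M.maxRank := by
  obtain ⟨R, σ, hR, hM'⟩ := h
  have hrank : ∀ v, (M'.completion v).rank = (M.completion v).rank := fun v => by
    have hc : M'.completion v = (R * M.completion v).submatrix id σ := by
      ext i j
      -- `R.map C * _` in `MEquiv` elaborates with the product of `CStarMatrix`, which agrees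
      -- with that of `Matrix` only definitionally.
      have hij : M'.entry i j = ∑ l, C (R i l) * M.entry l (σ j) := by rw [hM']; rfl
      simp [completion, hij, mul_apply]
    rw [hc, show (R * M.completion v).submatrix id σ
        = (R * M.completion v).submatrix (Equiv.refl _) σ from rfl, rank_submatrix,
      rank_mul_eq_right_of_isUnit_det _ _ ((isUnit_iff_isUnit_det R).mp hR)]
  simp only [maxRank, hrank]

theorem block_zero_zero_entry_eq_toBlocks₁₁ (M : ACIMatrix K ι m n) (hp : p + p' = m)
    (hq : q + q' = n) (h₁ : 0 + p ≤ m) (h₂ : 0 + q ≤ n) :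
    (M.block 0 0 p q h₁ h₂).entry =
      (M.entry.reindex (finSplitEquiv hp) (finSplitEquiv hq)).toBlocks₁₁ := by
  ext i j : 1
  exact congrArg₂ M.entry (Fin.ext (by simp)) (Fin.ext (by simp))

theorem block_entry_eq_toBlocks₂₂ (M : ACIMatrix K ι m n) (hp : p + p' = m) (hq : q + q' = n)
    (h₁ : p + p' ≤ m) (h₂ : q + q' ≤ n) :
    (M.block p q p' q' h₁ h₂).entry =
      (M.entry.reindex (finSplitEquiv hp) (finSplitEquiv hq)).toBlocks₂₂ :=
  rfl

theorem entry_eq_map_mul_submatrix_of_eq_submatrix {M N N' : ACIMatrix K ι m n}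
    {R : Matrix (Fin m) (Fin m) K} {τ : Equiv.Perm (Fin m)} {σ σ' : Equiv.Perm (Fin n)}
    (hN : N.entry = M.entry.submatrix τ σ.symm)
    (hN' : N'.entry = ((R.map C) * M.entry).submatrix id σ'.symm) :
    N'.entry = ((R.submatrix id τ).map (algebraMap K (MvPolynomial ι K)) * N.entry).submatrix id
      (σ'.symm.trans σ) := by
  ext i j : 1
  have hij : N'.entry i j = ∑ l, C (R i l) * M.entry l (σ'.symm j) := by rw [hN']; rfl
  rw [hij, submatrix_apply, mul_apply, ← Equiv.sum_comp τ]
  simp [hN]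

theorem maxRank_blocks_eq_of_reindex_eq {N N' : ACIMatrix K ι m n} (hp : p + p' = m)
    (hq : q + q' = n) {S : Matrix (Fin p ⊕ Fin p') (Fin p ⊕ Fin p') K} (hS : IsUnit S)
    (hS₂₁ : S.toBlocks₂₁ = 0) {ρ₁ : Equiv.Perm (Fin q)} {ρ₂ : Equiv.Perm (Fin q')}
    (hN₂₁ : (N.entry.reindex (finSplitEquiv hp) (finSplitEquiv hq)).toBlocks₂₁ = 0)
    (hN' : N'.entry.reindex (finSplitEquiv hp) (finSplitEquiv hq) =
      (S.map (algebraMap K (MvPolynomial ι K)) *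
        N.entry.reindex (finSplitEquiv hp) (finSplitEquiv hq)).submatrix id
        (Equiv.sumCongr ρ₁ ρ₂)) :
    (N'.block 0 0 p q (by omega) (by omega)).maxRank =
        (N.block 0 0 p q (by omega) (by omega)).maxRank ∧
      (N'.block p q p' q' (by omega) (by omega)).maxRank =
        (N.block p q p' q' (by omega) (by omega)).maxRank := by
  rw [← fromBlocks_toBlocks S, hS₂₁, isUnit_fromBlocks_zero₂₁] at hS
  rw [toBlocks_map_mul_submatrix_sumCongr _ _ _ _ _ hN₂₁] at hN'
  refine ⟨MEquiv.maxRank_eq ⟨_, ρ₁, hS.1, ?_⟩, MEquiv.maxRank_eq ⟨_, ρ₂, hS.2, ?_⟩⟩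
  · rw [block_zero_zero_entry_eq_toBlocks₁₁ _ hp hq, block_zero_zero_entry_eq_toBlocks₁₁ _ hp hq,
      hN', toBlocks_fromBlocks₁₁]
    rfl
  · rw [block_entry_eq_toBlocks₂₂ _ hp hq, block_entry_eq_toBlocks₂₂ _ hp hq, hN',
      toBlocks_fromBlocks₂₂, hS₂₁, Matrix.map_zero _ (map_zero _), Matrix.zero_mul, zero_add]
    rfl

theorem eq_and_FRmR_and_FCmR_of_eq_map_mul_submatrix {N N' : ACIMatrix K ι m n}
    {S : Matrix (Fin m) (Fin m) K} {π : Equiv.Perm (Fin n)} {k r r' : ℕ}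
    (hk : k ≤ n) (hr : r ≤ m) (hr' : r' ≤ m) (hS : IsUnit S)
    (hπ : ∀ j, j.val < k → (π j).val < k)
    (hN' : N'.entry = (S.map (algebraMap K (MvPolynomial ι K)) * N.entry).submatrix id π)
    (hz : ∀ (i : Fin m) (j : Fin n), m - r ≤ i.val → j.val < k → N.entry i j = 0)
    (hz' : ∀ (i : Fin m) (j : Fin n), m - r' ≤ i.val → j.val < k → N'.entry i j = 0)
    (hA : LinearIndependent K (N.block 0 0 (m - r) k (by omega) (by omega)).entry.row)
    (hA' : (N'.block 0 0 (m - r') k (by omega) (by omega)).FRmR)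
    (hC' : (N'.block (m - r') k r' (n - k) (by omega) (by omega)).FCmR) :
    r' = r ∧ (N.block 0 0 (m - r) k (by omega) (by omega)).FRmR ∧
      (N.block (m - r) k r (n - k) (by omega) (by omega)).FCmR := by
  have hp : m - r + r = m := by omega
  have hp' : m - r' + r' = m := by omega
  have hq : k + (n - k) = n := by omega
  obtain ⟨ρ₁, ρ₂, hρ⟩ := exists_permCongr_finSplitEquiv_eq_sumCongr hq π hπ
  have hfwd := reindex_map_mul_submatrix (algebraMap K _) S N.entry π (finSplitEquiv hp')
    (finSplitEquiv hp) (finSplitEquiv hq)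
  rw [← hN', hρ] at hfwd
  have hbwd := reindex_map_mul_submatrix (algebraMap K _) S⁻¹ N'.entry π.symm (finSplitEquiv hp)
    (finSplitEquiv hp') (finSplitEquiv hq)
  have hρ' : (finSplitEquiv hq).permCongr π.symm = Equiv.sumCongr ρ₁.symm ρ₂.symm := by
    rw [← Equiv.sumCongr_symm, ← hρ]
    rfl
  rw [← eq_map_nonsing_inv_mul_submatrix (algebraMap K _) hS hN', hρ'] at hbwd
  have hX₂₁ := toBlocks₂₁_reindex_finSplitEquiv_eq_zero hp hq hz
  have hY₂₁ := toBlocks₂₁_reindex_finSplitEquiv_eq_zero hp' hq hz'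
  have hA'li := hA'.linearIndependent_row_entry
  rw [block_zero_zero_entry_eq_toBlocks₁₁ _ hp hq] at hA
  rw [block_zero_zero_entry_eq_toBlocks₁₁ _ hp' hq] at hA'li
  obtain ⟨hle, hS₂₁⟩ :=
    card_le_and_toBlocks₂₁_eq_zero_of_eq_map_mul_submatrix hfwd hX₂₁ hY₂₁ hA hA'li
  obtain ⟨hle', -⟩ :=
    card_le_and_toBlocks₂₁_eq_zero_of_eq_map_mul_submatrix hbwd hY₂₁ hX₂₁ hA'li hA
  simp only [Fintype.card_fin] at hle hle'
  obtain rfl : r' = r := by omega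
  have hSu : IsUnit (S.reindex (finSplitEquiv hp) (finSplitEquiv hp)) := by
    rwa [isUnit_iff_isUnit_det, det_reindex_self, ← isUnit_iff_isUnit_det]
  obtain ⟨hAeq, hCeq⟩ := maxRank_blocks_eq_of_reindex_eq hp hq hSu hS₂₁ hX₂₁ hfwd
  exact ⟨rfl, hAeq.symm.trans hA', hCeq.symm.trans hC'⟩

end ACIMatrix

/-- if `Fs` is a factor (resp. semifactor) set of `M` and
`P M Q_Fs = [[A',B'],[0,C']]` is a block decomposition with the same column split in which
`P` is a row permutation and `A'` has linearly independent rows, then this decomposition is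
an `Fs`-decomposition (resp. `Fs`-semidecomposition): the zero block is Big (resp. Medium),
`A'` is FRmR and `C'` is FCmR. -/
theorem sweep_gives_decomposition {K : Type} [Field K] {ι : Type} {m n : ℕ}
    (M : ACIMatrix K ι m n) (Fs : Finset (Fin n))
    (τ : Equiv.Perm (Fin m)) (σ : Equiv.Perm (Fin n)) (N : ACIMatrix K ι m n)
    (r : ℕ) (hr : r ≤ m)
    (hσ : ∀ j : Fin n, j ∈ Fs ↔ (σ j).val < Fs.card)
    (hN : N.entry = M.entry.submatrix ⇑τ ⇑σ.symm)
    (hz : ∀ (i : Fin m) (j : Fin n), m - r ≤ i.val → j.val < Fs.card → N.entry i j = 0)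
    (hA : LinearIndependent K (fun i : Fin (m - r) => fun j : Fin Fs.card =>
      (N.block 0 0 (m - r) Fs.card (by omega)
        (by have := ACIMatrix.card_le_n Fs; omega)).entry i j)) :
    (M.IsFactorSet Fs →
      r + Fs.card > max m n ∧
      (N.block 0 0 (m - r) Fs.card (by omega)
        (by have := ACIMatrix.card_le_n Fs; omega)).FRmR ∧
      (N.block (m - r) Fs.card r (n - Fs.card) (by omega)
        (by have := ACIMatrix.card_le_n Fs; omega)).FCmR) ∧
    (M.IsSemifactorSet Fs →
      r + Fs.card = max m n ∧
      (N.block 0 0 (m - r) Fs.card (by omega)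
        (by have := ACIMatrix.card_le_n Fs; omega)).FRmR ∧
      (N.block (m - r) Fs.card r (n - Fs.card) (by omega)
        (by have := ACIMatrix.card_le_n Fs; omega)).FCmR) := by
  have hπ : ∀ σ' : Equiv.Perm (Fin n), (∀ j, j ∈ Fs ↔ (σ' j).val < Fs.card) →
      ∀ j : Fin n, j.val < Fs.card → ((σ'.symm.trans σ) j).val < Fs.card :=
    fun σ' hσ' j hj => (hσ _).mp ((hσ' _).mpr (by simpa using hj))
  constructor <;> rintro ⟨R, σ', N', r', hr', hR, hσ', hN', hz', hsize, hA', hC'⟩ <;>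
  · obtain ⟨rfl, hFR, hFC⟩ := ACIMatrix.eq_and_FRmR_and_FCmR_of_eq_map_mul_submatrix
      (ACIMatrix.card_le_n Fs) hr hr' ((isUnit_submatrix_equiv (.refl _) τ).mpr hR) (hπ σ' hσ')
      (ACIMatrix.entry_eq_map_mul_submatrix_of_eq_submatrix hN hN') hz hz' hA hA' hC'
    exact ⟨hsize, hFR, hFC⟩
end

section
/- Two factor sets of an ACI-matrix cannot be disjoint. -/
open MvPolynomial

section Aux
open Matrix Module



/-- rank of D is at most rank of the T-columns plus the number of other columns. -/
lemma aux_rank_split {K : Type} [Field K] {p q : ℕ} (D : Matrix (Fin p) (Fin q) K) (T : Finset (Fin q)) :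
    D.rank ≤ (D.submatrix id (Subtype.val : {j // j ∈ T} → Fin q)).rank + Tᶜ.card := by
  classical
  set D₁ := D.submatrix id (Subtype.val : {j // j ∈ T} → Fin q) with hD₁
  set D₂ := D.submatrix id (Subtype.val : {j // j ∈ Tᶜ} → Fin q) with hD₂
  have hsub : LinearMap.range D.mulVecLin ≤
      LinearMap.range D₁.mulVecLin ⊔ LinearMap.range D₂.mulVecLin := by
    rintro y ⟨x, rfl⟩
    refine Submodule.mem_sup.2 ⟨_, ⟨fun s => x s.val, rfl⟩, _, ⟨fun s => x s.val, rfl⟩, ?_⟩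
    funext i
    simp only [Matrix.mulVecLin_apply, Matrix.mulVec, dotProduct, Pi.add_apply,
      Matrix.submatrix_apply, id_eq, hD₁, hD₂]
    rw [← Finset.sum_add_sum_compl T (fun j => D i j * x j)]
    congr 1
    · exact (Finset.sum_coe_sort T (fun j => D i j * x j))
    · exact (Finset.sum_coe_sort Tᶜ (fun j => D i j * x j))
  have h1 : D.rank ≤ finrank K ↥(LinearMap.range D₁.mulVecLin ⊔ LinearMap.range D₂.mulVecLin) :=
    Submodule.finrank_mono hsub
  have h2 : finrank K ↥(LinearMap.range D₁.mulVecLin ⊔ LinearMap.range D₂.mulVecLin)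
      ≤ D₁.rank + D₂.rank := by
    have := Submodule.finrank_sup_add_finrank_inf_eq
      (LinearMap.range D₁.mulVecLin) (LinearMap.range D₂.mulVecLin)
    unfold Matrix.rank
    omega
  have h3 : D₂.rank ≤ Tᶜ.card := by
    simpa [Finset.card_compl] using D₂.rank_le_card_width
  omega

/-- rank + dim of a subspace of the left kernel is at most the number of rows. -/
lemma aux_rank_leftker {K : Type} [Field K] {p : ℕ}  {c : Type} [Fintype c] (B : Matrix (Fin p) c K)
    (W : Submodule K (Fin p → K)) (hW : ∀ w ∈ W, Matrix.vecMul w B = 0) :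
    B.rank + finrank K ↥W ≤ p := by
  have hker : W ≤ LinearMap.ker Bᵀ.mulVecLin := by
    intro w hw
    simp only [LinearMap.mem_ker, Matrix.mulVecLin_apply, Matrix.mulVec_transpose]
    exact hW w hw
  have h1 := LinearMap.finrank_range_add_finrank_ker Bᵀ.mulVecLin
  have h2 : finrank K ↥W ≤ finrank K ↥(LinearMap.ker Bᵀ.mulVecLin) :=
    Submodule.finrank_mono hker
  have h3 : Bᵀ.rank = B.rank := Matrix.rank_transpose B
  have h4 : finrank K (Fin p → K) = p := by simp
  unfold Matrix.rank at *
  omega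


end Aux

open Matrix Module

set_option maxHeartbeats 1000000

/-- two factor sets of an ACI-matrix cannot be disjoint. -/
theorem factorSets_not_disjoint {K : Type} [Field K] {ι : Type} {m n : ℕ}
    (M : ACIMatrix K ι m n) (F₁ F₂ : Finset (Fin n))
    (h₁ : M.IsFactorSet F₁) (h₂ : M.IsFactorSet F₂) :
    ¬ Disjoint F₁ F₂ := by
  intro hdisj
  classical
  obtain ⟨R₁, σ₁, N₁, r₁, hr₁, hR₁, hmem₁, hN₁, hz₁, hbig₁, hA₁, hC₁⟩ := h₁
  obtain ⟨R₂, σ₂, N₂, r₂, hr₂, hR₂, hmem₂, hN₂, hz₂, hbig₂, hA₂, hC₂⟩ := h₂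
  set c₁ := F₁.card with hc₁
  set c₂ := F₂.card with hc₂
  have hc₁n : c₁ ≤ n := ACIMatrix.card_le_n F₁
  have hc₂n : c₂ ≤ n := ACIMatrix.card_le_n F₂
  have hm1 : m < r₁ + c₁ := lt_of_le_of_lt le_sup_left hbig₁
  have hn1 : n < r₁ + c₁ := lt_of_le_of_lt le_sup_right hbig₁
  have hm2 : m < r₂ + c₂ := lt_of_le_of_lt le_sup_left hbig₂
  have hn2 : n < r₂ + c₂ := lt_of_le_of_lt le_sup_right hbig₂
  have hc12 : c₁ + c₂ ≤ n := by
    have h := Finset.card_union_of_disjoint hdisj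
    have h' := ACIMatrix.card_le_n (F₁ ∪ F₂)
    omega
  -- the two row families
  let f₁ : Fin r₁ → (Fin m → K) := fun k => R₁ ⟨m - r₁ + k, by omega⟩
  let f₂ : Fin r₂ → (Fin m → K) := fun k => R₂ ⟨m - r₂ + k, by omega⟩
  have li₁ : LinearIndependent K f₁ := by
    refine (Matrix.linearIndependent_rows_iff_isUnit.2 hR₁).comp
      (fun k : Fin r₁ => (⟨m - r₁ + k, by omega⟩ : Fin m)) ?_
    intro a b hab
    have : m - r₁ + (a : ℕ) = m - r₁ + b := congrArg Fin.val hab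
    exact Fin.ext (by omega)
  have li₂ : LinearIndependent K f₂ := by
    refine (Matrix.linearIndependent_rows_iff_isUnit.2 hR₂).comp
      (fun k : Fin r₂ => (⟨m - r₂ + k, by omega⟩ : Fin m)) ?_
    intro a b hab
    have : m - r₂ + (a : ℕ) = m - r₂ + b := congrArg Fin.val hab
    exact Fin.ext (by omega)
  set V₁ : Submodule K (Fin m → K) := Submodule.span K (Set.range f₁) with hV₁def
  set V₂ : Submodule K (Fin m → K) := Submodule.span K (Set.range f₂) with hV₂def
  have hdim₁ : Module.finrank K ↥V₁ = r₁ := by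
    rw [hV₁def, finrank_span_eq_card li₁, Fintype.card_fin]
  have hdim₂ : Module.finrank K ↥V₂ = r₂ := by
    rw [hV₂def, finrank_span_eq_card li₂, Fintype.card_fin]
  set d := Module.finrank K ↥(V₁ ⊓ V₂) with hddef
  have hd : r₁ + r₂ ≤ m + d := by
    have h := Submodule.finrank_sup_add_finrank_inf_eq V₁ V₂
    have h' : Module.finrank K ↥(V₁ ⊔ V₂) ≤ m := by
      have := Submodule.finrank_le (V₁ ⊔ V₂)
      simpa using this
    omega
  -- the matrix of the last r₁ rows of R₁
  let A₁ : Matrix (Fin r₁) (Fin m) K := Matrix.of f₁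
  have hA₁inj : Function.Injective A₁.vecMulLinear := by
    have : Function.Injective A₁.vecMul := Matrix.vecMul_injective_iff.2 li₁
    simpa [Matrix.coe_vecMulLinear] using this
  have hA₁range : LinearMap.range A₁.vecMulLinear = V₁ := by
    rw [range_vecMulLinear, hV₁def]; rfl
  set W : Submodule K (Fin r₁ → K) := Submodule.comap A₁.vecMulLinear V₂ with hWdef
  have hWd : Module.finrank K ↥W = d := by
    have hmap : Submodule.map A₁.vecMulLinear W = V₁ ⊓ V₂ := by
      rw [hWdef, Submodule.map_comap_eq, hA₁range, inf_comm]
    have := (Submodule.equivMapOfInjective A₁.vecMulLinear hA₁inj W).finrank_eq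
    rw [hmap] at this
    omega
  -- the relevant columns
  have hcol : ∀ j : Fin (n - c₁), c₁ + (j : ℕ) < n := fun j => by omega
  let tcol : Fin (n - c₁) → Fin n := fun j => σ₁.symm ⟨c₁ + j, hcol j⟩
  have htcol_inj : Function.Injective tcol := by
    intro a b hab
    have := congrArg (fun t => ((σ₁ t : Fin n) : ℕ)) hab
    simp [tcol] at this
    exact Fin.ext (by omega)
  set T : Finset (Fin (n - c₁)) := Finset.univ.filter (fun j => tcol j ∈ F₂) with hTdef
  have hTcard : T.card = c₂ := by
    rw [hc₂]
    refine Finset.card_bij (fun j _ => tcol j) ?_ ?_ ?_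
    · intro a ha; rw [hTdef] at ha; simpa using ha
    · intro a _ b _ hab; exact htcol_inj hab
    · intro t ht
      have ht1 : t ∉ F₁ := fun h => (Finset.disjoint_left.1 hdisj h) ht
      have hge : c₁ ≤ ((σ₁ t : Fin n) : ℕ) := by
        by_contra hlt
        exact ht1 ((hmem₁ t).2 (by omega))
      have hlt : ((σ₁ t : Fin n) : ℕ) < n := (σ₁ t).isLt
      have hkey : tcol ⟨(σ₁ t : Fin n) - c₁, by omega⟩ = t := by
        simp only [tcol, Equiv.symm_apply_eq]
        exact Fin.ext (by simp; omega)
      refine ⟨⟨(σ₁ t : Fin n) - c₁, by omega⟩, ?_, hkey⟩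
      rw [hTdef, Finset.mem_filter, hkey]
      exact ⟨Finset.mem_univ _, ht⟩
  -- bound the rank of every completion of the C-block of N₁
  have hbound : ∀ v : ι → K,
      ((N₁.block (m - r₁) c₁ r₁ (n - c₁) (by omega) (by omega)).completion v).rank
        ≤ (r₁ - d) + (n - c₁ - c₂) := by
    intro v
    set E := M.completion v with hEdef
    have hPol : ∀ (R : Matrix (Fin m) (Fin m) K) (i : Fin m) (j : Fin n),
        MvPolynomial.eval v
          ((HMul.hMul (α := Matrix (Fin m) (Fin m) (MvPolynomial ι K))
            (β := Matrix (Fin m) (Fin n) (MvPolynomial ι K))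
            (γ := Matrix (Fin m) (Fin n) (MvPolynomial ι K)) (R.map MvPolynomial.C) M.entry) i j)
          = (R * E) i j := by
      intro R i j
      simp only [Matrix.mul_apply, map_sum, Matrix.map_apply, _root_.map_mul,
        MvPolynomial.eval_C]
      rfl
    -- rows of V₂ kill the F₂-columns of E
    have hE₂ : ∀ i : Fin m, m - r₂ ≤ (i : ℕ) → ∀ t ∈ F₂, (R₂ * E) i t = 0 := by
      intro i hi t ht
      rw [← hPol]
      have he : (HMul.hMul (α := Matrix (Fin m) (Fin m) (MvPolynomial ι K))
          (β := Matrix (Fin m) (Fin n) (MvPolynomial ι K))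
          (γ := Matrix (Fin m) (Fin n) (MvPolynomial ι K)) (R₂.map MvPolynomial.C) M.entry) i t
          = N₂.entry i (σ₂ t) := by
        have e : ∀ k, N₂.entry i k = (HMul.hMul (α := Matrix (Fin m) (Fin m) (MvPolynomial ι K))
            (β := Matrix (Fin m) (Fin n) (MvPolynomial ι K))
            (γ := Matrix (Fin m) (Fin n) (MvPolynomial ι K)) (R₂.map MvPolynomial.C) M.entry)
            i (σ₂.symm k) := fun k => by rw [hN₂]; rfl
        rw [e, Equiv.symm_apply_apply]
      rw [he, hz₂ i (σ₂ t) hi ((hmem₂ t).1 ht)]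
      simp
    have hV₂kill : ∀ u ∈ V₂, ∀ t ∈ F₂, Matrix.vecMul u E t = 0 := by
      have hle : V₂ ≤ ⨅ t ∈ F₂, LinearMap.ker ((LinearMap.proj t).comp E.vecMulLinear) := by
        rw [hV₂def, Submodule.span_le]
        rintro _ ⟨k, rfl⟩
        simp only [SetLike.mem_coe, Submodule.mem_iInf, LinearMap.mem_ker, LinearMap.coe_comp,
          Function.comp_apply, LinearMap.proj_apply, Matrix.vecMulLinear_apply]
        intro t ht
        have heq : Matrix.vecMul (f₂ k) E t = (R₂ * E) ⟨m - r₂ + k, by omega⟩ t := by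
          rw [Matrix.mul_apply]
          rfl
        rw [heq]
        exact hE₂ _ (by simp) t ht
      intro u hu t ht
      have := hle hu
      simp only [Submodule.mem_iInf, LinearMap.mem_ker, LinearMap.coe_comp,
        Function.comp_apply, LinearMap.proj_apply, Matrix.vecMulLinear_apply] at this
      exact this t ht
    suffices hgen : ∀ D : Matrix (Fin r₁) (Fin (n - c₁)) K,
        (∀ i j, D i j = (A₁ * E) i (tcol j)) → D.rank ≤ (r₁ - d) + (n - c₁ - c₂) by
      refine hgen _ ?_
      intro i j
      have h1 : ((N₁.block (m - r₁) c₁ r₁ (n - c₁) (by omega) (by omega)).completion v) i j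
          = (R₁ * E) ⟨m - r₁ + i, by omega⟩ (tcol j) := by
        show MvPolynomial.eval v (N₁.entry _ _) = _
        rw [hN₁]
        simp only [Matrix.submatrix_apply, id_eq]
        exact hPol R₁ _ _
      have h2 : (A₁ * E) i (tcol j) = (R₁ * E) ⟨m - r₁ + i, by omega⟩ (tcol j) := by
        rw [Matrix.mul_apply, Matrix.mul_apply]
        rfl
      rw [h2]
      exact h1
    intro D hD
    set DT := D.submatrix id (Subtype.val : {j // j ∈ T} → Fin (n - c₁)) with hDTdef
    have hker : ∀ w ∈ W, Matrix.vecMul w DT = 0 := by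
      intro w hw
      have hu : A₁.vecMulLinear w ∈ V₂ := hw
      funext s
      have hs : tcol s.val ∈ F₂ := by
        exact (Finset.mem_filter.mp s.2).2
      have e1 : Matrix.vecMul w DT s = Matrix.vecMul w (A₁ * E) (tcol s.val) := by
        simp only [hDTdef, Matrix.vecMul, dotProduct, Matrix.submatrix_apply, id_eq]
        refine Finset.sum_congr rfl fun i _ => ?_
        rw [hD]
      have e2 := hV₂kill (A₁.vecMulLinear w) hu (tcol s.val) hs
      rw [Matrix.vecMulLinear_apply, Matrix.vecMul_vecMul] at e2
      rw [e1]
      show _ = (0 : {j // j ∈ T} → K) s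
      rw [e2]
      rfl
    have h5 := aux_rank_split D T
    rw [← hDTdef] at h5
    have h6 := aux_rank_leftker DT W hker
    have h7 : Tᶜ.card = (n - c₁) - c₂ := by
      rw [Finset.card_compl, hTcard]
      simp
    rw [hWd] at h6
    omega
  have hle : (N₁.block (m - r₁) c₁ r₁ (n - c₁) (by omega) (by omega)).maxRank
      ≤ (r₁ - d) + (n - c₁ - c₂) := by
    unfold ACIMatrix.maxRank
    refine csSup_le ⟨((N₁.block (m - r₁) c₁ r₁ (n - c₁) (by omega) (by omega)).completion
      (fun _ => 0)).rank, fun _ => 0, rfl⟩ ?_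
    rintro r ⟨v, rfl⟩
    exact hbound v
  have hfc : (N₁.block (m - r₁) c₁ r₁ (n - c₁) (by omega) (by omega)).maxRank = n - c₁ := hC₁
  have hcontra : n - c₁ ≤ (r₁ - d) + (n - c₁ - c₂) := hfc.symm.trans_le hle
  omega
end

section
/- Two semifactor sets of a wide ACI-matrix (more columns than rows) cannot be disjoint. -/
open MvPolynomial

section Helpers

variable {K : Type} [Field K] {ι : Type}

/-- Some completion attains the maximum rank. -/
lemma ACIMatrix.exists_completion_rank_eq_maxRank {p q : ℕ} (M : ACIMatrix K ι p q) :
    ∃ v : ι → K, (M.completion v).rank = M.maxRank := by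
  have hne : Set.Nonempty {r | ∃ v : ι → K, (M.completion v).rank = r} :=
    ⟨(M.completion (fun _ => 0)).rank, fun _ => 0, rfl⟩
  have hbdd : BddAbove {r | ∃ v : ι → K, (M.completion v).rank = r} := by
    refine ⟨p, fun r hr => ?_⟩
    obtain ⟨v, hv⟩ := hr
    exact hv ▸ (M.completion v).rank_le_height
  exact Nat.sSup_mem hne hbdd

lemma eval_mapC_mul {m n : ℕ} (R : Matrix (Fin m) (Fin m) K)
    (P : Matrix (Fin m) (Fin n) (MvPolynomial ι K)) (v : ι → K) (i : Fin m) (j : Fin n) :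
    eval v (((R.map MvPolynomial.C) * P : Matrix (Fin m) (Fin n) (MvPolynomial ι K)) i j)
      = ∑ k, R i k * eval v (P k j) := by
  change eval v (∑ k, (R.map MvPolynomial.C) i k * P k j) = _
  rw [map_sum]
  congr 1; funext k
  rw [Matrix.map_apply, eval_mul, eval_C]

/-- A matrix whose rows of index `≥ k` vanish has rank at most `k`. -/
lemma rank_le_of_rows_zero {p q k : ℕ} (A : Matrix (Fin p) (Fin q) K) (hk : k ≤ p)
    (h : ∀ (i : Fin p) (j : Fin q), k ≤ i.val → A i j = 0) : A.rank ≤ k := by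
  have hA : A = ((1 : Matrix (Fin p) (Fin p) K).submatrix id (Fin.castLE hk)) *
      A.submatrix (Fin.castLE hk) id := by
    funext i j
    rw [Matrix.mul_apply]
    by_cases hi : i.val < k
    · rw [Finset.sum_eq_single (⟨i.val, hi⟩ : Fin k)]
      · simp [Matrix.one_apply, Fin.ext_iff]
      · intro b _ hb
        have : i ≠ Fin.castLE hk b := by
          intro he
          exact hb (by apply Fin.ext; simpa [Fin.ext_iff] using he.symm)
        simp [Matrix.one_apply, this]
      · intro hmem; exact absurd (Finset.mem_univ _) hmem
    · rw [Finset.sum_eq_zero, h i j (by omega)]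
      intro b _
      have : i ≠ Fin.castLE hk b := by
        intro he
        have : i.val = b.val := by simpa [Fin.ext_iff] using he
        omega
      simp [Matrix.one_apply, this]
  have h1 := Matrix.rank_mul_le_right
    ((1 : Matrix (Fin p) (Fin p) K).submatrix id (Fin.castLE hk)) (A.submatrix (Fin.castLE hk) id)
  rw [← hA] at h1
  exact h1.trans ((Matrix.rank_le_card_height _).trans_eq (Fintype.card_fin k))

/-- Selecting rows cannot increase rank. -/
lemma rank_row_submatrix_le {p p' q : ℕ} (A : Matrix (Fin p) (Fin q) K) (f : Fin p' → Fin p) :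
    (A.submatrix f id).rank ≤ A.rank := by
  have hA : A.submatrix f id = ((1 : Matrix (Fin p) (Fin p) K).submatrix f id) * A := by
    funext i j
    rw [Matrix.mul_apply]
    rw [Finset.sum_eq_single (f i)]
    · simp [Matrix.one_apply]
    · intro b _ hb; simp [Matrix.one_apply, hb.symm]
    · intro hmem; exact absurd (Finset.mem_univ _) hmem
  rw [hA]
  exact Matrix.rank_mul_le_right _ _

/-- Rank is invariant under permuting columns by an equivalence. -/
lemma rank_col_equiv {p q q' : ℕ} (A : Matrix (Fin p) (Fin q) K) (e : Fin q' ≃ Fin q) :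
    (A.submatrix id e).rank = A.rank := by
  rw [Matrix.rank, Matrix.rank, Matrix.mulVecLin_submatrix, LinearMap.range_comp,
    LinearMap.range_comp, LinearMap.range_eq_top.mpr
      (LinearMap.funLeft_surjective_of_injective K K _ e.symm.injective), Submodule.map_top]
  have : LinearMap.funLeft K K (id : Fin p → Fin p) = LinearMap.id := by
    ext x; simp [LinearMap.funLeft]
  rw [this, Submodule.map_id]

/-- An injective column selection of the identity has full column rank. -/
lemma card_le_rank_one_submatrix {p q : ℕ} (g : Fin q → Fin p) (hg : Function.Injective g) :
    q ≤ ((1 : Matrix (Fin p) (Fin p) K).submatrix id g).rank := by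
  set E := (1 : Matrix (Fin p) (Fin p) K).submatrix id g with hE
  have hEE : E.transpose * E = (1 : Matrix (Fin q) (Fin q) K) := by
    funext a b
    rw [Matrix.mul_apply]
    rw [Finset.sum_eq_single (g a)]
    · by_cases hab : a = b
      · subst hab; simp [hE, Matrix.one_apply]
      · have : g a ≠ g b := fun h => hab (hg h)
        simp [hE, Matrix.one_apply, hab, this]
    · intro c _ hc; simp [hE, Matrix.one_apply, hc]
    · intro hmem; exact absurd (Finset.mem_univ _) hmem
  calc q = Fintype.card (Fin q) := (Fintype.card_fin q).symm
    _ = (1 : Matrix (Fin q) (Fin q) K).rank := Matrix.rank_one.symm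
    _ = (E.transpose * E).rank := by rw [hEE]
    _ ≤ E.rank := Matrix.rank_mul_le_right _ _

/-- A square matrix of full rank over a field has a left inverse. -/
lemma exists_left_inverse_of_rank {p : ℕ} (A : Matrix (Fin p) (Fin p) K) (h : A.rank = p) :
    ∃ D : Matrix (Fin p) (Fin p) K, D * A = 1 := by
  have hsurj : Function.Surjective A.mulVec := by
    have htop : LinearMap.range A.mulVecLin = ⊤ := by
      apply Submodule.eq_top_of_finrank_eq
      rw [← Matrix.rank, h, Module.finrank_fin_fun]
    intro y
    obtain ⟨x, hx⟩ := LinearMap.range_eq_top.mp htop y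
    exact ⟨x, hx⟩
  have hu : IsUnit A := Matrix.mulVec_surjective_iff_isUnit.mp hsurj
  exact ⟨A⁻¹, Matrix.nonsing_inv_mul A ((Matrix.isUnit_iff_isUnit_det A).mp hu)⟩

end Helpers

set_option maxHeartbeats 2000000 in
/-- two semifactor sets of a wide ACI-matrix cannot be disjoint. -/
theorem semifactorSets_not_disjoint_of_wide {K : Type} [Field K] {ι : Type} {m n : ℕ}
    (M : ACIMatrix K ι m n) (hwide : m < n) (F₁ F₂ : Finset (Fin n))
    (h₁ : M.IsSemifactorSet F₁) (h₂ : M.IsSemifactorSet F₂) :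
    ¬ Disjoint F₁ F₂ := by
  intro hd
  obtain ⟨R₁, σ₁, N₁, r₁, hr₁, hu₁, hmem₁, hN₁, hz₁, hs₁, hA₁, hC₁⟩ := h₁
  obtain ⟨R₂, σ₂, N₂, r₂, hr₂, hu₂, hmem₂, hN₂, hz₂, hs₂, hA₂, hC₂⟩ := h₂
  have hmax : max m n = n := max_eq_right hwide.le
  rw [hmax] at hs₁ hs₂
  have hcn : F₁.card ≤ n := ACIMatrix.card_le_n F₁
  have hcard₁ : F₁.card = n - r₁ := by omega
  have hcard₂ : F₂.card = n - r₂ := by omega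
  have pf1 : m - r₁ + r₁ ≤ m := by omega
  have pf2 : F₁.card + (n - F₁.card) ≤ n := by omega
  have hr₁' : n - F₁.card = r₁ := by omega
  -- a completion making the C-block of the first factorization full rank
  obtain ⟨v, hv⟩ :=
    (N₁.block (m - r₁) F₁.card r₁ (n - F₁.card) pf1 pf2).exists_completion_rank_eq_maxRank
  rw [hC₁] at hv
  set Mv := M.completion v with hMv
  -- enumeration of F₂
  set e : Fin F₂.card → Fin n := fun j => F₂.orderEmbOfFin rfl j with he
  have hemem : ∀ j, e j ∈ F₂ := fun j => F₂.orderEmbOfFin_mem rfl j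
  have heinj : Function.Injective e := fun a b hab => (F₂.orderEmbOfFin rfl).injective hab
  have henot : ∀ j, F₁.card ≤ (σ₁ (e j)).val := by
    intro j
    by_contra hlt
    exact (Finset.disjoint_left.mp hd ((hmem₁ (e j)).mpr (by omega))) (hemem j)
  set X : Matrix (Fin m) (Fin F₂.card) K := Mv.submatrix id e with hX
  -- upper bound on the rank of X from the second factorization
  have hXle : X.rank ≤ m - r₂ := by
    have hdet₂ : IsUnit R₂.det := (Matrix.isUnit_iff_isUnit_det R₂).mp hu₂
    rw [← Matrix.rank_mul_eq_right_of_isUnit_det R₂ X hdet₂]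
    refine rank_le_of_rows_zero _ (by omega) ?_
    intro i j hi
    have hme : N₂.entry i (σ₂ (e j)) =
        ((R₂.map MvPolynomial.C) * M.entry :
          Matrix (Fin m) (Fin n) (MvPolynomial ι K)) i (e j) := by
      rw [hN₂]; exact congrArg (fun c => ((R₂.map MvPolynomial.C) * M.entry :
          Matrix (Fin m) (Fin n) (MvPolynomial ι K)) i c) (σ₂.symm_apply_apply (e j))
    have hz : N₂.entry i (σ₂ (e j)) = 0 :=
      hz₂ i (σ₂ (e j)) hi ((hmem₂ (e j)).mp (hemem j))
    have hRX : (R₂ * X) i j = eval v (((R₂.map MvPolynomial.C) * M.entry :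
        Matrix (Fin m) (Fin n) (MvPolynomial ι K)) i (e j)) := by
      rw [eval_mapC_mul, Matrix.mul_apply]
      rfl
    rw [hRX, ← hme, hz, map_zero]
  -- lower bound on the rank of X from the first factorization
  have hrkCv' : ((((N₁.block (m - r₁) F₁.card r₁ (n - F₁.card) pf1 pf2).completion v)).submatrix
      id (finCongr hr₁'.symm)).rank = r₁ := by
    rw [rank_col_equiv, hv, hr₁']
  obtain ⟨D, hD⟩ := exists_left_inverse_of_rank _ hrkCv'
  set g : Fin F₂.card → Fin r₁ := fun j =>
    ⟨(σ₁ (e j)).val - F₁.card, by have := henot j; have := (σ₁ (e j)).2; omega⟩ with hg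
  have hginj : Function.Injective g := by
    intro a b hab
    have h1 := henot a
    have h2 := henot b
    have hv' : (σ₁ (e a)).val - F₁.card = (σ₁ (e b)).val - F₁.card := by
      simpa [hg, Fin.ext_iff] using hab
    have : σ₁ (e a) = σ₁ (e b) := Fin.ext (by omega)
    exact heinj (σ₁.injective this)
  -- the key identification
  have hkey : ((((N₁.block (m - r₁) F₁.card r₁ (n - F₁.card) pf1 pf2).completion v)).submatrix
        id (finCongr hr₁'.symm)).submatrix id g =
      (R₁ * X).submatrix (fun i : Fin r₁ => (⟨m - r₁ + i.val, by omega⟩ : Fin m)) id := by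
    funext i j
    have hb1 : ((finCongr hr₁'.symm) (g j)).val < n - F₁.card := ((finCongr hr₁'.symm) (g j)).2
    have hb2 := i.2
    have hfin : (⟨F₁.card + ((finCongr hr₁'.symm) (g j)).val, by omega⟩ : Fin n) = σ₁ (e j) := by
      apply Fin.ext
      have h2 := henot j
      simp only [hg, finCongr_apply, Fin.coe_cast]
      omega
    have hlhs : (((((N₁.block (m - r₁) F₁.card r₁ (n - F₁.card) pf1 pf2).completion
          v)).submatrix id (finCongr hr₁'.symm)).submatrix id g) i j =
        eval v (N₁.entry ⟨m - r₁ + i.val, by omega⟩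
          ⟨F₁.card + ((finCongr hr₁'.symm) (g j)).val, by omega⟩) := rfl
    rw [hlhs, hfin, hN₁]
    simp only [Matrix.submatrix_apply, id_eq, Equiv.symm_apply_apply]
    refine (congrArg (fun c => eval v (((R₁.map MvPolynomial.C) * M.entry :
      Matrix (Fin m) (Fin n) (MvPolynomial ι K)) ⟨m - r₁ + i.val, by omega⟩ c))
        (σ₁.symm_apply_apply (e j))).trans ?_
    rw [eval_mapC_mul, Matrix.mul_apply]
    rfl
  have hXge : F₂.card ≤ X.rank := by
    have h1 : F₂.card ≤ ((1 : Matrix (Fin r₁) (Fin r₁) K).submatrix id g).rank :=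
      card_le_rank_one_submatrix g hginj
    have h2 : (1 : Matrix (Fin r₁) (Fin r₁) K).submatrix id g =
        D * (((((N₁.block (m - r₁) F₁.card r₁ (n - F₁.card) pf1 pf2).completion
          v)).submatrix id (finCongr hr₁'.symm)).submatrix id g) := by
      rw [← hD]
      funext i j
      simp [Matrix.mul_apply]
    calc F₂.card ≤ ((1 : Matrix (Fin r₁) (Fin r₁) K).submatrix id g).rank := h1
      _ ≤ (((((N₁.block (m - r₁) F₁.card r₁ (n - F₁.card) pf1 pf2).completion
            v)).submatrix id (finCongr hr₁'.symm)).submatrix id g).rank := by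
          rw [h2]; exact Matrix.rank_mul_le_right _ _
      _ = ((R₁ * X).submatrix (fun i : Fin r₁ => (⟨m - r₁ + i.val, by omega⟩ : Fin m)) id).rank
          := by rw [hkey]
      _ ≤ (R₁ * X).rank := rank_row_submatrix_le _ _
      _ ≤ X.rank := Matrix.rank_mul_le_right _ _
  omega
end
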